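/- arXiv:2403.16411 — 3 statements merged into one kernel-verified Lean document; each statement's English description precedes it below -/
import Mathlib

section
/- Let 𝔸 be a real Banach algebra with unit 1. Define J : 𝔸 → 𝔸 by J(a) := ∑_{k=0}^∞ ((-1)^k/(k+1)!) • a^k (the series converges absolutely for every a). Then, as a → 0 in 𝔸, the map a ↦ J(a) - exp(-(1/2) • a) * (1 + (1/24) • a^2) is big-O of a ↦ ‖a‖^4; that is, there exist C > 0 and a neighbourhood of 0 on which ‖J(a) - exp(-(1/2)a) * (1 + (1/24)a^2)‖ ≤ C‖a‖^4. -/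
/-!
`J a` and `exp (-(1/2) • a)` are sums of scalar power series in `a` with coefficients bounded by
`1 / k!`, so each differs from its Taylor polynomial `J₃`, `E₃` of degree `3` by `O(‖a‖⁴)`, and the
factor `1 + a²/24` stays bounded near `0`. The Taylor polynomials commute, being polynomials in the
single element `a`, and a direct computation gives `J₃ - E₃ (1 + a²/24) = a⁴ (-1/192 + a/1152)`.
-/

open scoped Nat Topology
open Asymptotics

namespace FormalMultilinearSeries

variable {𝕜 E : Type*} [NontriviallyNormedField 𝕜] [NormedRing E] [NormedAlgebra 𝕜 E]
  {c : ℕ → 𝕜}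

theorem ofScalars_radius_eq_top_of_norm_le_inv_factorial (hc : ∀ n, ‖c n‖ ≤ (n ! : ℝ)⁻¹) :
    (ofScalars E c).radius = ⊤ := by
  refine radius_eq_top_of_summable_norm _ fun r => ?_
  refine .of_nonneg_of_le (fun _ => by positivity) (fun n => ?_)
    ((Real.summable_pow_div_factorial r).mul_left (max 1 ‖(1 : E)‖))
  rw [ofScalars_norm_eq_mul, div_eq_inv_mul]
  calc ‖c n‖ * ‖ContinuousMultilinearMap.mkPiAlgebraFin 𝕜 n E‖ * r ^ n
      ≤ (n ! : ℝ)⁻¹ * max 1 ‖(1 : E)‖ * r ^ n := by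
        gcongr
        · exact hc n
        · exact ContinuousMultilinearMap.norm_mkPiAlgebraFin_le
    _ = _ := by ring

theorem summable_norm_smul_pow_of_radius_eq_top (hc : (ofScalars E c).radius = ⊤) (x : E) :
    Summable fun n => ‖c n • x ^ n‖ := by
  simpa only [ofScalars_apply_eq] using (ofScalars E c).summable_norm_apply (x := x) (by simp [hc])

theorem isBigO_ofScalarsSum_sub_sum_range [CompleteSpace E] (hc : 0 < (ofScalars E c).radius)
    (n : ℕ) :
    (fun x : E => ofScalarsSum c x - ∑ k ∈ Finset.range n, c k • x ^ k) =O[𝓝 0]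
      fun x => ‖x‖ ^ n := by
  simpa [ofScalarsSum, partialSum, ofScalars_apply_eq] using
    ((ofScalars E c).hasFPowerSeriesOnBall hc).hasFPowerSeriesAt.isBigO_sub_partialSum_pow n

end FormalMultilinearSeries

open FormalMultilinearSeries

theorem norm_pow_div_factorial_le_inv_factorial {t : ℝ} (ht : ‖t‖ ≤ 1) (k : ℕ) :
    ‖t ^ k / (k ! : ℝ)‖ ≤ (k ! : ℝ)⁻¹ := by
  rw [norm_div, norm_pow, RCLike.norm_natCast, div_eq_mul_inv]
  exact mul_le_of_le_one_left (by positivity) (pow_le_one₀ (norm_nonneg t) ht)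

/-- The Taylor coefficients of `(1 - e⁻ˣ) / x`. -/
noncomputable def jacobianCoeff (k : ℕ) : ℝ := (-1) ^ k / (k + 1)!

theorem norm_jacobianCoeff_le (k : ℕ) : ‖jacobianCoeff k‖ ≤ (k ! : ℝ)⁻¹ := by
  rw [jacobianCoeff, norm_div, norm_pow, norm_neg, norm_one, one_pow, one_div,
    RCLike.norm_natCast]
  exact inv_anti₀ (by positivity) (mod_cast Nat.factorial_le k.le_succ)

theorem ofScalars_jacobianCoeff_radius (E : Type*) [NormedRing E] [NormedAlgebra ℝ E] :
    (ofScalars E jacobianCoeff).radius = ⊤ :=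
  ofScalars_radius_eq_top_of_norm_le_inv_factorial norm_jacobianCoeff_le

section BanachAlgebra

variable {𝔸 : Type*} [NormedRing 𝔸] [NormedAlgebra ℝ 𝔸]

theorem exp_smul_eq_ofScalarsSum (t : ℝ) (a : 𝔸) :
    NormedSpace.exp (t • a) = ofScalarsSum (fun k => t ^ k / (k ! : ℝ)) a := by
  rw [NormedSpace.exp_eq_tsum ℝ, ofScalars_sum_eq]
  refine tsum_congr fun k => ?_
  rw [smul_pow, smul_smul, div_eq_inv_mul]

theorem sum_range_four_jacobianCoeff_sub_exp_taylor_mul (a : 𝔸) :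
    ∑ k ∈ Finset.range 4, jacobianCoeff k • a ^ k -
      (∑ k ∈ Finset.range 4, ((-(1 / 2) : ℝ) ^ k / (k ! : ℝ)) • a ^ k) *
        (1 + (1 / 24 : ℝ) • a ^ 2) =
      a ^ 4 * ((-(1 / 192) : ℝ) • 1 + (1 / 1152 : ℝ) • a) := by
  simp only [jacobianCoeff, Finset.sum_range_succ, Finset.sum_range_zero, Nat.factorial, add_mul,
    mul_add, smul_mul_assoc, mul_smul_comm, mul_one, ← pow_add, ← pow_succ]
  norm_num
  module

theorem isBigO_ofScalarsSum_jacobianCoeff_sub_exp_mul [CompleteSpace 𝔸] :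
    (fun a : 𝔸 => ofScalarsSum jacobianCoeff a -
        NormedSpace.exp (-((1 / 2 : ℝ) • a)) * (1 + (1 / 24 : ℝ) • a ^ 2)) =O[𝓝 0]
      fun a => ‖a‖ ^ 4 := by
  have hE_radius : (ofScalars 𝔸 fun k : ℕ => (-(1 / 2) : ℝ) ^ k / (k ! : ℝ)).radius = ⊤ :=
    ofScalars_radius_eq_top_of_norm_le_inv_factorial
      (norm_pow_div_factorial_le_inv_factorial (by norm_num))
  have hJ := isBigO_ofScalarsSum_sub_sum_range
    (ENNReal.zero_lt_top.trans_eq (ofScalars_jacobianCoeff_radius 𝔸).symm) 4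
  have hE := isBigO_ofScalarsSum_sub_sum_range (ENNReal.zero_lt_top.trans_eq hE_radius.symm) 4
  have hG : (fun a : 𝔸 => 1 + (1 / 24 : ℝ) • a ^ 2) =O[𝓝 0] fun _ => (1 : ℝ) :=
    (Continuous.tendsto (by fun_prop) 0).isBigO_one ℝ
  have hR : (fun a : 𝔸 => (-(1 / 192) : ℝ) • (1 : 𝔸) + (1 / 1152 : ℝ) • a) =O[𝓝 0]
      fun _ => (1 : ℝ) :=
    (Continuous.tendsto (by fun_prop) 0).isBigO_one ℝ
  have hpow : (fun a : 𝔸 => a ^ 4) =O[𝓝 0] fun a => ‖a‖ ^ 4 :=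
    .of_norm_eventuallyLE (.of_forall fun a => norm_pow_le' a (by norm_num))
  have hEG := hE.mul hG
  have hpowR := hpow.mul hR
  simp only [mul_one] at hEG hpowR
  refine ((hJ.sub hEG).add hpowR).congr_left fun a => ?_
  rw [← sum_range_four_jacobianCoeff_sub_exp_taylor_mul, ← neg_smul, exp_smul_eq_ofScalarsSum,
    sub_mul]
  abel

end BanachAlgebra

/-- In a real Banach algebra `𝔸`, let `J a := ∑_k ((-1)^k/(k+1)!) • a^k` (the series converges
absolutely for every `a`).  Then, as `a → 0`, the difference
`J a - exp (-(1/2) • a) * (1 + (1/24) • a^2)` is big-O of `‖a‖^4`: there exist `C > 0` and a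
neighbourhood of `0` on which `‖J a - exp (-(1/2) • a) * (1 + (1/24) • a^2)‖ ≤ C * ‖a‖^4`. -/
theorem jacobian_parallelTransport_curvature_approx
    (𝔸 : Type*) [NormedRing 𝔸] [NormedAlgebra ℝ 𝔸] [CompleteSpace 𝔸]
    (J : 𝔸 → 𝔸) (hJ : ∀ a : 𝔸, J a = ∑' k : ℕ, ((-1 : ℝ) ^ k / ((k + 1)! : ℝ)) • a ^ k) :
    (∀ a : 𝔸, Summable fun k : ℕ => ‖((-1 : ℝ) ^ k / ((k + 1)! : ℝ)) • a ^ k‖) ∧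
      ∃ C > (0 : ℝ), ∀ᶠ a in 𝓝 (0 : 𝔸),
        ‖J a - NormedSpace.exp (-((1 / 2 : ℝ) • a)) * (1 + (1 / 24 : ℝ) • a ^ 2)‖ ≤
          C * ‖a‖ ^ 4 := by
  have hJ_eq : J = ofScalarsSum jacobianCoeff := funext fun a => by
    rw [hJ, ofScalars_sum_eq]
    rfl
  refine ⟨summable_norm_smul_pow_of_radius_eq_top (ofScalars_jacobianCoeff_radius 𝔸), ?_⟩
  obtain ⟨C, hC, hbound⟩ := (hJ_eq ▸ isBigO_ofScalarsSum_jacobianCoeff_sub_exp_mul).exists_pos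
  exact ⟨C, hC, hbound.bound.mono fun a ha => by simpa using ha⟩
end

section
/- Let d be a positive natural number and let S and Σ be real symmetric positive definite d×d matrices. Then trace(Σ^{-1} S) - Real.log (det(Σ^{-1} S)) ≥ d, with equality if and only if Σ = S. Equivalently, Real.log (det Σ) + trace(Σ^{-1} S) ≥ Real.log (det S) + d, with equality if and only if Σ = S. -/
/-!
With `R = √(C⁻¹)`, the matrix `M = R S R` is positive definite and similar to `C⁻¹ S`, so
`tr (C⁻¹ S) - log det (C⁻¹ S) - d = ∑ᵢ (λᵢ - log λᵢ - 1)` over the eigenvalues `λᵢ > 0` of `M`.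
Each term is nonnegative since `log λ ≤ λ - 1`, with equality only at `λ = 1`; and all
eigenvalues equal `1` exactly when `M = 1`, i.e. `C = S`.
-/

open Matrix

lemma Real.log_eq_sub_one_iff {x : ℝ} (hx : 0 < x) : Real.log x = x - 1 ↔ x = 1 := by
  refine ⟨fun h => by_contra fun hne => (Real.log_lt_sub_one_of_pos hx hne).ne h, ?_⟩
  rintro rfl
  simp

namespace Matrix

variable {n : Type*} [Fintype n] [DecidableEq n]

lemma IsHermitian.eq_one_of_eigenvalues_eq_one {A : Matrix n n ℝ} (hA : A.IsHermitian)
    (h : ∀ i, hA.eigenvalues i = 1) : A = 1 := by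
  have hspec : Set.EqOn id 1 (spectrum ℝ A) := by
    rw [hA.spectrum_real_eq_range_eigenvalues]
    rintro _ ⟨i, rfl⟩
    exact h i
  calc A = cfc id A := (cfc_id ℝ A).symm
    _ = cfc (1 : ℝ → ℝ) A := cfc_congr hspec
    _ = 1 := cfc_const_one ℝ A

lemma PosDef.trace_sub_log_det_sub_card_eq_sum {A : Matrix n n ℝ} (hA : A.PosDef) :
    A.trace - Real.log A.det - Fintype.card n =
      ∑ i, (hA.1.eigenvalues i - Real.log (hA.1.eigenvalues i) - 1) := by
  simp only [hA.1.trace_eq_sum_eigenvalues, hA.1.det_eq_prod_eigenvalues,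
    RCLike.ofReal_real_eq_id, id, Real.log_prod fun i _ => (hA.eigenvalues_pos i).ne',
    Finset.sum_sub_distrib]
  simp

lemma PosDef.card_le_trace_sub_log_det {A : Matrix n n ℝ} (hA : A.PosDef) :
    (Fintype.card n : ℝ) ≤ A.trace - Real.log A.det := by
  have hsum := hA.trace_sub_log_det_sub_card_eq_sum
  have : 0 ≤ ∑ i, (hA.1.eigenvalues i - Real.log (hA.1.eigenvalues i) - 1) :=
    Finset.sum_nonneg fun i _ => by linarith [Real.log_le_sub_one_of_pos (hA.eigenvalues_pos i)]
  linarith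

lemma PosDef.trace_sub_log_det_eq_card_iff {A : Matrix n n ℝ} (hA : A.PosDef) :
    A.trace - Real.log A.det = Fintype.card n ↔ A = 1 := by
  refine ⟨fun h => hA.1.eq_one_of_eigenvalues_eq_one fun i => ?_, by rintro rfl; simp⟩
  have hzero : ∑ i, (hA.1.eigenvalues i - Real.log (hA.1.eigenvalues i) - 1) = 0 := by
    rw [← hA.trace_sub_log_det_sub_card_eq_sum, h, sub_self]
  rw [Finset.sum_eq_zero_iff_of_nonneg fun i _ => by
    linarith [Real.log_le_sub_one_of_pos (hA.eigenvalues_pos i)]] at hzero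
  rw [← Real.log_eq_sub_one_iff (hA.eigenvalues_pos i)]
  linarith [hzero i (Finset.mem_univ i)]

open scoped MatrixOrder in
lemma PosDef.exists_posDef_similar_inv_mul {C S : Matrix n n ℝ} (hC : C.PosDef) (hS : S.PosDef) :
    ∃ M : Matrix n n ℝ, M.PosDef ∧ M.trace = (C⁻¹ * S).trace ∧ M.det = (C⁻¹ * S).det ∧
      (M = 1 ↔ C = S) := by
  set R := CFC.sqrt C⁻¹
  have hCinv_nonneg : 0 ≤ C⁻¹ := hC.inv.posSemidef.nonneg
  have hRR : R * R = C⁻¹ := CFC.sqrt_mul_sqrt_self _ hCinv_nonneg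
  have hR : IsUnit R := (CFC.isUnit_sqrt_iff _ hCinv_nonneg).mpr hC.inv.isUnit
  have hRH : Rᴴ = R := (CFC.sqrt_nonneg _).posSemidef.isHermitian.eq
  refine ⟨R * S * R, ?_, ?_, ?_, ?_⟩
  · have := hS.conjTranspose_mul_mul_same (mulVec_injective_iff_isUnit.mpr hR)
    rwa [hRH] at this
  · rw [trace_mul_cycle, hRR]
  · rw [det_mul, det_mul, det_mul, ← hRR, det_mul]
    ring
  · calc R * S * R = 1 ↔ R * (R * S * R) * R = R * 1 * R := by
          rw [hR.mul_left_inj, hR.mul_right_inj]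
      _ ↔ C⁻¹ * S * C⁻¹ = C⁻¹ * C * C⁻¹ := by
          simp only [← mul_assoc, mul_one, hRR]
          rw [mul_assoc (C⁻¹ * S), hRR, nonsing_inv_mul C hC.det_pos.ne'.isUnit, one_mul]
      _ ↔ C = S := by
          rw [hC.inv.isUnit.mul_left_inj, hC.inv.isUnit.mul_right_inj, eq_comm]

lemma log_det_inv_mul {C S : Matrix n n ℝ} (hC : C.det ≠ 0) (hS : S.det ≠ 0) :
    Real.log (C⁻¹ * S).det = Real.log S.det - Real.log C.det := by
  rw [det_mul, det_nonsing_inv, Ring.inverse_eq_inv', Real.log_mul (inv_ne_zero hC) hS,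
    Real.log_inv]
  ring

end Matrix

theorem trace_sub_log_det_ge_general (d : ℕ)
    (S C : Matrix (Fin d) (Fin d) ℝ) (hS : S.PosDef) (hC : C.PosDef) :
    ((d : ℝ) ≤ (C⁻¹ * S).trace - Real.log (C⁻¹ * S).det ∧
      ((C⁻¹ * S).trace - Real.log (C⁻¹ * S).det = (d : ℝ) ↔ C = S)) ∧
    (Real.log S.det + (d : ℝ) ≤ Real.log C.det + (C⁻¹ * S).trace ∧
      (Real.log C.det + (C⁻¹ * S).trace = Real.log S.det + (d : ℝ) ↔ C = S)) := by
  obtain ⟨M, hM, htrace, hdet, hM_one⟩ := hC.exists_posDef_similar_inv_mul hS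
  have hle : (d : ℝ) ≤ (C⁻¹ * S).trace - Real.log (C⁻¹ * S).det := by
    simpa [htrace, hdet] using hM.card_le_trace_sub_log_det
  have hiff : (C⁻¹ * S).trace - Real.log (C⁻¹ * S).det = (d : ℝ) ↔ C = S := by
    rw [← htrace, ← hdet, ← hM_one, ← hM.trace_sub_log_det_eq_card_iff, Fintype.card_fin]
  have hlog := log_det_inv_mul hC.det_pos.ne' hS.det_pos.ne'
  refine ⟨⟨hle, hiff⟩, by linarith, ?_⟩
  rw [← hiff]
  constructor <;> intro h <;> linarith

/-- For symmetric positive definite `d × d` real matrices `S` and `C`,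
`trace (C⁻¹ * S) - log (det (C⁻¹ * S)) ≥ d`, with equality iff `C = S`; equivalently,
`log (det C) + trace (C⁻¹ * S) ≥ log (det S) + d`, with equality iff `C = S`.  This is the
critical-point computation for the covariance in the KL divergence to a Gaussian. -/
theorem trace_sub_log_det_ge (d : ℕ) (hd : 0 < d)
    (S C : Matrix (Fin d) (Fin d) ℝ) (hS : S.PosDef) (hC : C.PosDef) :
    ((d : ℝ) ≤ (C⁻¹ * S).trace - Real.log (C⁻¹ * S).det ∧
      ((C⁻¹ * S).trace - Real.log (C⁻¹ * S).det = (d : ℝ) ↔ C = S)) ∧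
    (Real.log S.det + (d : ℝ) ≤ Real.log C.det + (C⁻¹ * S).trace ∧
      (Real.log C.det + (C⁻¹ * S).trace = Real.log S.det + (d : ℝ) ↔ C = S)) :=
  trace_sub_log_det_ge_general d S C hS hC
end

section
/- Let u ∈ ℝ^3 be nonzero, let θ := ‖u‖ (Euclidean norm), and let U be the 3×3 real matrix with U v = u × v for all v ∈ ℝ^3 (the cross-product matrix; U is skew-symmetric with entries U = [[0, -u_3, u_2], [u_3, 0, -u_1], [-u_2, u_1, 0]]). Then ∑_{k=0}^∞ ((-1)^k/(k+1)!) • U^k = I - ((1 - cos θ)/θ^2) • U + ((θ - sin θ)/θ^3) • U^2, where the series converges absolutely. -/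
open scoped Nat
open Matrix

attribute [local instance] Matrix.frobeniusNormedAddCommGroup Matrix.frobeniusNormedRing
  Matrix.frobeniusNormedAlgebra

/-! Since `U v = u × v`, the expansion of the vector triple product gives `U³ = -θ² U`, hence
`U^(2m+1) = (-θ²)^m U` and `U^(2m+2) = (-θ²)^m U²`. After its constant term the series
therefore splits into `U` and `U²` times scalar series, which are the tails of the cosine and
sine series divided by `-θ²` and `-θ³`. Absolute convergence follows by comparison with the
exponential series. -/

theorem Real.hasSum_one_sub_cos_div_sq {θ : ℝ} (hθ : θ ≠ 0) :
    HasSum (fun m : ℕ => (-θ ^ 2) ^ m / (2 * m + 2)!) ((1 - Real.cos θ) / θ ^ 2) := by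
  have h := (hasSum_nat_add_iff' 1).2 (Real.hasSum_cos θ)
  simp only [Finset.sum_range_one, pow_zero, mul_zero, Nat.factorial_zero, Nat.cast_one,
    div_one, mul_one] at h
  rw [← neg_div_neg_eq, neg_sub]
  refine (h.div_const _).congr_fun fun m => ?_
  rw [show 2 * (m + 1) = 2 * m + 2 by ring, neg_pow, ← pow_mul, pow_add θ]
  field_simp
  ring

theorem Real.hasSum_sub_sin_div_cube {θ : ℝ} (hθ : θ ≠ 0) :
    HasSum (fun m : ℕ => (-θ ^ 2) ^ m / (2 * m + 3)!) ((θ - Real.sin θ) / θ ^ 3) := by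
  have h := (hasSum_nat_add_iff' 1).2 (Real.hasSum_sin θ)
  simp only [Finset.sum_range_one, pow_zero, mul_zero, zero_add, pow_one, Nat.factorial_one,
    Nat.cast_one, div_one, one_mul] at h
  rw [← neg_div_neg_eq, neg_sub]
  refine (h.div_const _).congr_fun fun m => ?_
  rw [show 2 * (m + 1) + 1 = 2 * m + 3 by ring, neg_pow, ← pow_mul, pow_add θ]
  field_simp
  ring

section
variable {R : Type*} [CommSemiring R] {𝔸 : Type*} [Semiring 𝔸] [Algebra R 𝔸]

theorem pow_two_mul_add_one_of_pow_three_eq_smul {A : 𝔸} {c : R} (hA : A ^ 3 = c • A)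
    (m : ℕ) : A ^ (2 * m + 1) = c ^ m • A := by
  induction m with
  | zero => simp
  | succ m ih =>
    rw [show 2 * (m + 1) + 1 = 2 + (2 * m + 1) by ring, pow_add, ih, mul_smul_comm,
      ← pow_succ, hA, smul_smul, pow_succ]

theorem pow_two_mul_add_two_of_pow_three_eq_smul {A : 𝔸} {c : R} (hA : A ^ 3 = c • A)
    (m : ℕ) : A ^ (2 * m + 2) = c ^ m • A ^ 2 := by
  rw [pow_succ, pow_two_mul_add_one_of_pow_three_eq_smul hA, smul_mul_assoc, ← sq]
end

theorem Matrix.pow_three_eq_neg_dotProduct_smul_of_mulVec_eq_cross {R : Type*} [CommRing R]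
    {U : Matrix (Fin 3) (Fin 3) R} {u : Fin 3 → R} (hU : ∀ v, U *ᵥ v = u ⨯₃ v) :
    U ^ 3 = (-(u ⬝ᵥ u)) • U := by
  refine ext_iff_mulVec.2 fun v => ?_
  rw [pow_three, ← mulVec_mulVec, ← mulVec_mulVec, smul_mulVec, hU, hU, hU,
    cross_cross_eq_smul_sub_smul', dot_self_cross, zero_smul, zero_sub, neg_smul]

theorem hasSum_jacobian_series_of_pow_three_eq {𝔸 : Type*} [Ring 𝔸] [Algebra ℝ 𝔸]
    [TopologicalSpace 𝔸] [IsTopologicalAddGroup 𝔸] [ContinuousSMul ℝ 𝔸]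
    {A : 𝔸} {θ : ℝ} (hθ : θ ≠ 0) (hA : A ^ 3 = (-θ ^ 2) • A) :
    HasSum (fun k : ℕ => ((-1 : ℝ) ^ k / ((k + 1)! : ℝ)) • A ^ k)
      (1 - ((1 - Real.cos θ) / θ ^ 2) • A + ((θ - Real.sin θ) / θ ^ 3) • A ^ 2) := by
  have hodd : HasSum
      (fun m : ℕ => ((-1 : ℝ) ^ (2 * m + 1) / ((2 * m + 2)! : ℝ)) • A ^ (2 * m + 1))
      (-((1 - Real.cos θ) / θ ^ 2) • A) := by
    refine ((Real.hasSum_one_sub_cos_div_sq hθ).neg.smul_const A).congr_fun fun m => ?_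
    rw [pow_two_mul_add_one_of_pow_three_eq_smul hA, smul_smul,
      (odd_two_mul_add_one m).neg_one_pow]
    congr 1
    ring
  have heven : HasSum
      (fun m : ℕ => ((-1 : ℝ) ^ (2 * m + 2) / ((2 * m + 3)! : ℝ)) • A ^ (2 * m + 2))
      (((θ - Real.sin θ) / θ ^ 3) • A ^ 2) := by
    refine ((Real.hasSum_sub_sin_div_cube hθ).smul_const (A ^ 2)).congr_fun fun m => ?_
    rw [pow_two_mul_add_two_of_pow_three_eq_smul hA, smul_smul,
      Even.neg_one_pow ⟨m + 1, by ring⟩, one_div_mul_eq_div]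
  have hshift := HasSum.even_add_odd
    (f := fun n : ℕ => ((-1 : ℝ) ^ (n + 1) / ((n + 1 + 1)! : ℝ)) • A ^ (n + 1)) hodd heven
  refine (hasSum_nat_add_iff' 1).1 ?_
  simp only [Finset.sum_range_one, pow_zero, zero_add, Nat.factorial_one, Nat.cast_one, div_one,
    one_smul]
  rwa [add_sub_right_comm, sub_sub_cancel_left, ← neg_smul]

theorem summable_norm_jacobian_series {𝔸 : Type*} [NormedRing 𝔸] [NormedAlgebra ℝ 𝔸] (A : 𝔸) :
    Summable fun k : ℕ => ‖((-1 : ℝ) ^ k / ((k + 1)! : ℝ)) • A ^ k‖ := by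
  refine (NormedSpace.norm_expSeries_summable' (𝕂 := ℝ) A).of_nonneg_of_le
    (fun _ => norm_nonneg _) fun k => ?_
  rw [norm_smul, norm_smul]
  gcongr
  simp only [norm_div, norm_pow, norm_neg, norm_one, one_pow, norm_inv, Real.norm_natCast,
    one_div]
  gcongr
  exact k.le_succ

theorem so3_jacobian_closed_form_general (u : EuclideanSpace ℝ (Fin 3)) (hu : u ≠ 0)
    (U : Matrix (Fin 3) (Fin 3) ℝ)
    (hU : ∀ v : Fin 3 → ℝ, U *ᵥ v = crossProduct (WithLp.equiv 2 (Fin 3 → ℝ) u) v) :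
    (Summable fun k : ℕ => ‖((-1 : ℝ) ^ k / ((k + 1)! : ℝ)) • U ^ k‖) ∧
      ∑' k : ℕ, ((-1 : ℝ) ^ k / ((k + 1)! : ℝ)) • U ^ k =
        1 - ((1 - Real.cos ‖u‖) / ‖u‖ ^ 2) • U + ((‖u‖ - Real.sin ‖u‖) / ‖u‖ ^ 3) • U ^ 2 := by
  have hcube : U ^ 3 = (-‖u‖ ^ 2) • U := by
    rw [Matrix.pow_three_eq_neg_dotProduct_smul_of_mulVec_eq_cross hU,
      EuclideanSpace.real_norm_sq_eq]
    simp [dotProduct, sq]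
  exact ⟨summable_norm_jacobian_series U,
    (hasSum_jacobian_series_of_pow_three_eq (norm_ne_zero_iff.2 hu) hcube).tsum_eq⟩

/-- Closed form of the left-trivialised Jacobian of the exponential map of `SO(3)`: for a
nonzero `u ∈ ℝ³` with `θ = ‖u‖` and cross-product matrix `U` (so `U v = u × v`),
`∑ ((-1)^k/(k+1)!) • U^k = I - ((1 - cos θ)/θ²) • U + ((θ - sin θ)/θ³) • U²`, the series
converging absolutely. -/
theorem so3_jacobian_closed_form (u : EuclideanSpace ℝ (Fin 3)) (hu : u ≠ 0)
    (U : Matrix (Fin 3) (Fin 3) ℝ)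
    (hU : ∀ v : Fin 3 → ℝ, U *ᵥ v = crossProduct (WithLp.equiv 2 (Fin 3 → ℝ) u) v)
    (hU' : U = !![0, -u 2, u 1; u 2, 0, -u 0; -u 1, u 0, 0]) :
    (Summable fun k : ℕ => ‖((-1 : ℝ) ^ k / ((k + 1)! : ℝ)) • U ^ k‖) ∧
      ∑' k : ℕ, ((-1 : ℝ) ^ k / ((k + 1)! : ℝ)) • U ^ k =
        1 - ((1 - Real.cos ‖u‖) / ‖u‖ ^ 2) • U + ((‖u‖ - Real.sin ‖u‖) / ‖u‖ ^ 3) • U ^ 2 :=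
  so3_jacobian_closed_form_general u hu U hU
end
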